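/- arXiv:math-ph/0604071 — 3 statements merged into one kernel-verified Lean document; each statement's English description precedes it below -/
import Mathlib

section
/- Let ω be a state on a C*-algebra 𝔐 containing commuting subalgebras 𝔄, 𝔅. Then the Bell correlation β(ω) = (1/2) sup ω(A₁(B₁+B₂) + A₂(B₁−B₂)), where the sup is over self-adjoint contractions A_i ∈ 𝔄, B_j ∈ 𝔅, satisfies Cirelson's bound β(ω) ≤ √2. -/
open scoped ComplexOrder

/-- For a self-adjoint element `a` of a C*-algebra with `-1 ≤ a ≤ 1`, we have `0 ≤ 1 - a * a`. -/
lemma stmt5_aux_one_sub_sq_nonneg {M : Type*} [NormedRing M] [StarRing M] [CStarRing M]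
    [NormedAlgebra ℂ M] [StarModule ℂ M] [CompleteSpace M] [PartialOrder M] [StarOrderedRing M]
    (a : M) (ha : IsSelfAdjoint a) (h1 : -1 ≤ a) (h2 : a ≤ 1) : 0 ≤ 1 - a * a := by
  letI : CStarAlgebra M := {}
  have h1' : ∀ x ∈ spectrum ℝ a, (-1:ℝ) ≤ x := by
    have := (algebraMap_le_iff_le_spectrum (R := ℝ) (r := -1) (a := a) ha).mp (by simpa using h1)
    simpa using this
  have h2' : ∀ x ∈ spectrum ℝ a, x ≤ (1:ℝ) := (CFC.le_one_iff (R := ℝ) a ha).mp h2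
  have key : (1 : M) - a * a = cfc (fun x : ℝ => 1 - x ^ 2) a := by
    rw [cfc_sub (fun _ : ℝ => (1:ℝ)) (fun x : ℝ => x ^ 2) a, cfc_const_one ℝ a,
      cfc_pow_id (R := ℝ) a, sq]
  rw [key]
  exact cfc_nonneg fun x hx => by nlinarith [h1' x hx, h2' x hx]

/-- Cirelson's inequality.  For a state `ω` on a unital C*-algebra `M`
containing two elementwise-commuting C*-subalgebras `𝔄`, `𝔅`, and any self-adjoint
contractions `A₁, A₂ ∈ 𝔄`, `B₁, B₂ ∈ 𝔅` (with `-1 ≤ Aᵢ ≤ 1`, `-1 ≤ Bⱼ ≤ 1`), the Bell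
correlation satisfies `(1/2) ω(A₁(B₁+B₂) + A₂(B₁−B₂)) ≤ √2`.  Since the Bell correlation
`β(ω)` is the supremum of these quantities, this expresses `β(ω) ≤ √2`. -/
theorem stmt5 {M : Type*} [NormedRing M] [StarRing M] [CStarRing M] [NormedAlgebra ℂ M]
    [StarModule ℂ M] [CompleteSpace M] [PartialOrder M] [StarOrderedRing M]
    (𝔄 𝔅 : StarSubalgebra ℂ M)
    (hcomm : ∀ a ∈ 𝔄, ∀ b ∈ 𝔅, a * b = b * a)
    (ω : M →ₗ[ℂ] ℂ) (hω1 : ω 1 = 1) (hωpos : ∀ a : M, 0 ≤ ω (star a * a))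
    (A₁ A₂ B₁ B₂ : M)
    (hA₁ : A₁ ∈ 𝔄) (hA₂ : A₂ ∈ 𝔄) (hB₁ : B₁ ∈ 𝔅) (hB₂ : B₂ ∈ 𝔅)
    (hA₁sa : IsSelfAdjoint A₁) (hA₂sa : IsSelfAdjoint A₂)
    (hB₁sa : IsSelfAdjoint B₁) (hB₂sa : IsSelfAdjoint B₂)
    (hA₁le : -1 ≤ A₁ ∧ A₁ ≤ 1) (hA₂le : -1 ≤ A₂ ∧ A₂ ≤ 1)
    (hB₁le : -1 ≤ B₁ ∧ B₁ ≤ 1) (hB₂le : -1 ≤ B₂ ∧ B₂ ≤ 1) :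
    (1 / 2 : ℝ) * (ω (A₁ * (B₁ + B₂) + A₂ * (B₁ - B₂))).re ≤ Real.sqrt 2 := by
  obtain ⟨s, hs_def⟩ : ∃ s : ℝ, s = Real.sqrt 2 := ⟨_, rfl⟩
  rw [← hs_def]
  have hspos : 0 < s := hs_def ▸ Real.sqrt_pos.mpr (by norm_num)
  have hs : s * s = 2 := hs_def ▸ Real.mul_self_sqrt (by norm_num)
  -- commutation facts
  have hc11 : B₁ * A₁ = A₁ * B₁ := (hcomm A₁ hA₁ B₁ hB₁).symm
  have hc12 : B₂ * A₁ = A₁ * B₂ := (hcomm A₁ hA₁ B₂ hB₂).symm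
  have hc21 : B₁ * A₂ = A₂ * B₁ := (hcomm A₂ hA₂ B₁ hB₁).symm
  have hc22 : B₂ * A₂ = A₂ * B₂ := (hcomm A₂ hA₂ B₂ hB₂).symm
  set S : M := A₁ * (B₁ + B₂) + A₂ * (B₁ - B₂) with hS_def
  set P₁ : M := s • A₁ - (B₁ + B₂) with hP₁_def
  set P₂ : M := s • A₂ - (B₁ - B₂) with hP₂_def
  -- the key algebraic identity
  have key : (8:ℝ) • (1:M) - (2*s) • S =
      (2:ℝ) • (1 - A₁*A₁) + (2:ℝ) • (1 - A₂*A₂) + (2:ℝ) • (1 - B₁*B₁) + (2:ℝ) • (1 - B₂*B₂)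
        + P₁ * P₁ + P₂ * P₂ := by
    simp only [hS_def, hP₁_def, hP₂_def, sub_mul, mul_sub, add_mul, mul_add,
      smul_mul_assoc, mul_smul_comm, smul_smul, smul_sub, smul_add, hc11, hc12, hc21, hc22, hs]
    module
  -- positivity of the right-hand side
  have hP₁sa : IsSelfAdjoint P₁ := by
    rw [IsSelfAdjoint, hP₁_def, star_sub, star_smul, star_add, hA₁sa.star_eq, hB₁sa.star_eq,
      hB₂sa.star_eq, star_trivial]
  have hP₂sa : IsSelfAdjoint P₂ := by
    rw [IsSelfAdjoint, hP₂_def, star_sub, star_smul, star_sub, hA₂sa.star_eq, hB₁sa.star_eq,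
      hB₂sa.star_eq, star_trivial]
  have hpos : (0:M) ≤ (8:ℝ) • (1:M) - (2*s) • S := by
    rw [key]
    have h2 : (0:ℝ) ≤ 2 := by norm_num
    refine add_nonneg (add_nonneg (add_nonneg (add_nonneg (add_nonneg ?_ ?_) ?_) ?_) ?_) ?_
    · exact smul_nonneg h2 (stmt5_aux_one_sub_sq_nonneg A₁ hA₁sa hA₁le.1 hA₁le.2)
    · exact smul_nonneg h2 (stmt5_aux_one_sub_sq_nonneg A₂ hA₂sa hA₂le.1 hA₂le.2)
    · exact smul_nonneg h2 (stmt5_aux_one_sub_sq_nonneg B₁ hB₁sa hB₁le.1 hB₁le.2)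
    · exact smul_nonneg h2 (stmt5_aux_one_sub_sq_nonneg B₂ hB₂sa hB₂le.1 hB₂le.2)
    · exact hP₁sa.mul_self_nonneg
    · exact hP₂sa.mul_self_nonneg
  -- the state is monotone
  have hmono : ∀ x : M, 0 ≤ x → 0 ≤ ω x := by
    intro x hx
    rw [StarOrderedRing.nonneg_iff] at hx
    refine AddSubmonoid.closure_induction (fun y hy => ?_) (by simp) (fun y z _ _ hy hz => ?_) hx
    · obtain ⟨a, rfl⟩ := hy
      exact hωpos a
    · rw [map_add]; exact add_nonneg hy hz
  have hω : (0:ℂ) ≤ ω ((8:ℝ) • (1:M) - (2*s) • S) := hmono _ hpos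
  have hcalc : ω ((8:ℝ) • (1:M) - (2*s) • S) = (8:ℂ) - ((2*s : ℝ) : ℂ) * ω S := by
    rw [map_sub, ← algebraMap_smul ℂ (8:ℝ) (1:M), ← algebraMap_smul ℂ (2*s) S,
      map_smul, map_smul, smul_eq_mul, smul_eq_mul, hω1, Complex.coe_algebraMap]
    push_cast
    ring
  rw [hcalc, Complex.le_def] at hω
  have hre : 0 ≤ 8 - 2 * s * (ω S).re := by
    have := hω.1
    simpa [Complex.sub_re, Complex.mul_re, Complex.ofReal_re, Complex.ofReal_im] using this
  rw [hS_def] at *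
  nlinarith [hre, hs, hspos, sq_nonneg (ω (A₁ * (B₁ + B₂) + A₂ * (B₁ - B₂))).re]
end

section
/- Every separable state ω of a bipartite system (𝔄, 𝔅 ⊆ 𝔐) satisfies the Bell–CHSH inequality β(ω) ≤ 1. -/
/-!
Positivity makes the value of a state on a self-adjoint contraction a real number in `[-1, 1]`.
On a product state the CHSH expression factorizes as `a₁ (b₁ + b₂) + a₂ (b₁ - b₂)` with such
numbers, which is at most `|b₁ + b₂| + |b₁ - b₂| ≤ 2`. A bound on `Re ψ(x)` holding for all
product states `ψ` is preserved under convex combinations and pointwise limits, hence holds for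
every separable state.
-/

open scoped ComplexOrder

section BellCHSH

universe u

variable {M : Type u} [NormedRing M] [StarRing M] [CStarRing M] [NormedAlgebra ℂ M]
    [StarModule ℂ M] [CompleteSpace M]

/-- A state on a unital C*-algebra: a normalized positive linear functional. -/
def IsStateOn (ω : M →ₗ[ℂ] ℂ) : Prop :=
  ω 1 = 1 ∧ ∀ a : M, 0 ≤ ω (star a * a)

/-- A product state for the bipartite system `(𝔄, 𝔅 ⊆ M)`:
a state with `ω(AB) = ω(A)ω(B)` for `A ∈ 𝔄`, `B ∈ 𝔅`. -/
def IsProductStateOn (𝔄 𝔅 : StarSubalgebra ℂ M) (ω : M →ₗ[ℂ] ℂ) : Prop :=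
  IsStateOn ω ∧ ∀ a ∈ 𝔄, ∀ b ∈ 𝔅, ω (a * b) = ω a * ω b

/-- A convex combination of product states. -/
def IsConvexCombOfProductStates (𝔄 𝔅 : StarSubalgebra ℂ M) (φ : M →ₗ[ℂ] ℂ) : Prop :=
  ∃ (n : ℕ) (t : Fin n → ℝ) (ψ : Fin n → (M →ₗ[ℂ] ℂ)),
    (∀ i, 0 ≤ t i) ∧ (∑ i, t i) = 1 ∧ (∀ i, IsProductStateOn 𝔄 𝔅 (ψ i)) ∧
    φ = ∑ i, (t i : ℂ) • ψ i

/-- A separable state: an element of the weak-* closed convex hull of the product states,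
i.e. a pointwise (weak-*) limit of a net of convex combinations of product states. -/
def IsSeparableState (𝔄 𝔅 : StarSubalgebra ℂ M) (ω : M →ₗ[ℂ] ℂ) : Prop :=
  IsStateOn ω ∧ ∃ (ι : Type u) (l : Filter ι), l.NeBot ∧ ∃ σ : ι → (M →ₗ[ℂ] ℂ),
    (∀ i, IsConvexCombOfProductStates 𝔄 𝔅 (σ i)) ∧
    ∀ a : M, Filter.Tendsto (fun i => σ i a) l (nhds (ω a))

lemma mul_le_abs_of_mem_Icc {a c : ℝ} (ha : a ∈ Set.Icc (-1) 1) : a * c ≤ |c| :=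
  (le_abs_self _).trans <| by
    rw [abs_mul]; exact mul_le_of_le_one_left (abs_nonneg c) (abs_le.2 ha)

lemma abs_add_add_abs_sub_le_two {b₁ b₂ : ℝ} (hb₁ : b₁ ∈ Set.Icc (-1) 1)
    (hb₂ : b₂ ∈ Set.Icc (-1) 1) : |b₁ + b₂| + |b₁ - b₂| ≤ 2 := by
  obtain ⟨_, _⟩ := hb₁
  obtain ⟨_, _⟩ := hb₂
  rcases abs_cases (b₁ + b₂) with ⟨_, _⟩ | ⟨_, _⟩ <;>
    rcases abs_cases (b₁ - b₂) with ⟨_, _⟩ | ⟨_, _⟩ <;> linarith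

lemma chsh_le_two {a₁ a₂ b₁ b₂ : ℝ} (ha₁ : a₁ ∈ Set.Icc (-1) 1) (ha₂ : a₂ ∈ Set.Icc (-1) 1)
    (hb₁ : b₁ ∈ Set.Icc (-1) 1) (hb₂ : b₂ ∈ Set.Icc (-1) 1) :
    a₁ * (b₁ + b₂) + a₂ * (b₁ - b₂) ≤ 2 :=
  calc a₁ * (b₁ + b₂) + a₂ * (b₁ - b₂) ≤ |b₁ + b₂| + |b₁ - b₂| :=
        add_le_add (mul_le_abs_of_mem_Icc ha₁) (mul_le_abs_of_mem_Icc ha₂)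
    _ ≤ 2 := abs_add_add_abs_sub_le_two hb₁ hb₂

lemma Complex.exists_ofReal_of_mem_Icc {z : ℂ} {a b : ℝ} (hz : z ∈ Set.Icc (a : ℂ) b) :
    ∃ r ∈ Set.Icc a b, z = r := by
  obtain ⟨⟨hre₁, him⟩, hre₂, -⟩ := hz
  exact ⟨z.re, ⟨hre₁, hre₂⟩, Complex.ext rfl (by simpa using him.symm)⟩

lemma Complex.re_chsh_le_two {a₁ a₂ b₁ b₂ : ℂ} (ha₁ : a₁ ∈ Set.Icc (-1) 1)
    (ha₂ : a₂ ∈ Set.Icc (-1) 1) (hb₁ : b₁ ∈ Set.Icc (-1) 1) (hb₂ : b₂ ∈ Set.Icc (-1) 1) :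
    (a₁ * (b₁ + b₂) + a₂ * (b₁ - b₂)).re ≤ 2 := by
  obtain ⟨r₁, hr₁, rfl⟩ := exists_ofReal_of_mem_Icc (a := -1) (b := 1) (by simpa using ha₁)
  obtain ⟨r₂, hr₂, rfl⟩ := exists_ofReal_of_mem_Icc (a := -1) (b := 1) (by simpa using ha₂)
  obtain ⟨s₁, hs₁, rfl⟩ := exists_ofReal_of_mem_Icc (a := -1) (b := 1) (by simpa using hb₁)
  obtain ⟨s₂, hs₂, rfl⟩ := exists_ofReal_of_mem_Icc (a := -1) (b := 1) (by simpa using hb₂)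
  exact_mod_cast chsh_le_two hr₁ hr₂ hs₁ hs₂

section States

variable {𝔐 : Type*} [NormedRing 𝔐] [StarRing 𝔐] [NormedAlgebra ℂ 𝔐]

section Order

variable [PartialOrder 𝔐] [StarOrderedRing 𝔐]

namespace IsStateOn

variable {ω : 𝔐 →ₗ[ℂ] ℂ}

lemma map_nonneg (hω : IsStateOn ω) {x : 𝔐} (hx : 0 ≤ x) : 0 ≤ ω x := by
  rw [StarOrderedRing.nonneg_iff] at hx
  induction hx using AddSubmonoid.closure_induction with
  | mem y hy => obtain ⟨s, rfl⟩ := hy; exact hω.2 s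
  | zero => simp
  | add a b _ _ ha hb => rw [map_add]; exact add_nonneg ha hb

lemma monotone (hω : IsStateOn ω) : Monotone ω := fun x y hxy => by
  simpa using hω.map_nonneg (sub_nonneg.2 hxy)

lemma map_mem_Icc (hω : IsStateOn ω) {x : 𝔐} (hx : x ∈ Set.Icc (-1) 1) :
    ω x ∈ Set.Icc (-1) 1 := by
  simpa [hω.1] using hω.monotone.mapsTo_Icc hx

end IsStateOn

lemma IsProductStateOn.re_chsh_le_two [StarModule ℂ 𝔐] {𝔄 𝔅 : StarSubalgebra ℂ 𝔐}
    {A₁ A₂ B₁ B₂ : 𝔐} {ψ : 𝔐 →ₗ[ℂ] ℂ} (hψ : IsProductStateOn 𝔄 𝔅 ψ)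
    (hA₁ : A₁ ∈ 𝔄) (hA₂ : A₂ ∈ 𝔄) (hB₁ : B₁ ∈ 𝔅) (hB₂ : B₂ ∈ 𝔅)
    (hA₁le : A₁ ∈ Set.Icc (-1) 1) (hA₂le : A₂ ∈ Set.Icc (-1) 1)
    (hB₁le : B₁ ∈ Set.Icc (-1) 1) (hB₂le : B₂ ∈ Set.Icc (-1) 1) :
    (ψ (A₁ * (B₁ + B₂) + A₂ * (B₁ - B₂))).re ≤ 2 := by
  obtain ⟨hstate, hfactor⟩ := hψ
  rw [map_add, hfactor _ hA₁ _ (add_mem hB₁ hB₂), hfactor _ hA₂ _ (sub_mem hB₁ hB₂), map_add,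
    map_sub]
  exact Complex.re_chsh_le_two (hstate.map_mem_Icc hA₁le) (hstate.map_mem_Icc hA₂le)
    (hstate.map_mem_Icc hB₁le) (hstate.map_mem_Icc hB₂le)

end Order

variable [StarModule ℂ 𝔐] {𝔄 𝔅 : StarSubalgebra ℂ 𝔐}

lemma IsConvexCombOfProductStates.re_le {φ : 𝔐 →ₗ[ℂ] ℂ} {x : 𝔐} {c : ℝ}
    (hφ : IsConvexCombOfProductStates 𝔄 𝔅 φ)
    (hbound : ∀ ψ, IsProductStateOn 𝔄 𝔅 ψ → (ψ x).re ≤ c) : (φ x).re ≤ c := by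
  obtain ⟨n, t, ψ, ht₀, ht₁, hψ, rfl⟩ := hφ
  calc ((∑ i, (t i : ℂ) • ψ i) x).re = ∑ i, t i * (ψ i x).re := by
        simp [LinearMap.sum_apply, Complex.re_sum]
    _ ≤ ∑ i, t i * c := by gcongr with i; exacts [ht₀ i, hbound _ (hψ i)]
    _ = c := by rw [← Finset.sum_mul, ht₁, one_mul]

lemma IsSeparableState.re_le {ω : 𝔐 →ₗ[ℂ] ℂ} {x : 𝔐} {c : ℝ}
    (hω : IsSeparableState 𝔄 𝔅 ω)
    (hbound : ∀ ψ, IsProductStateOn 𝔄 𝔅 ψ → (ψ x).re ≤ c) : (ω x).re ≤ c := by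
  obtain ⟨-, ι, l, hl, σ, hσ, hlim⟩ := hω
  exact le_of_tendsto ((Complex.continuous_re.tendsto _).comp (hlim x))
    (Filter.Eventually.of_forall fun i => (hσ i).re_le hbound)

end States

theorem stmt6_general [PartialOrder M] [StarOrderedRing M]
    (𝔄 𝔅 : StarSubalgebra ℂ M)
    (ω : M →ₗ[ℂ] ℂ) (hsep : IsSeparableState 𝔄 𝔅 ω)
    (A₁ A₂ B₁ B₂ : M)
    (hA₁ : A₁ ∈ 𝔄) (hA₂ : A₂ ∈ 𝔄) (hB₁ : B₁ ∈ 𝔅) (hB₂ : B₂ ∈ 𝔅)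
    (hA₁le : -1 ≤ A₁ ∧ A₁ ≤ 1) (hA₂le : -1 ≤ A₂ ∧ A₂ ≤ 1)
    (hB₁le : -1 ≤ B₁ ∧ B₁ ≤ 1) (hB₂le : -1 ≤ B₂ ∧ B₂ ≤ 1) :
    (1 / 2 : ℝ) * (ω (A₁ * (B₁ + B₂) + A₂ * (B₁ - B₂))).re ≤ 1 := by
  have hchsh : (ω (A₁ * (B₁ + B₂) + A₂ * (B₁ - B₂))).re ≤ 2 :=
    hsep.re_le fun ψ hψ => hψ.re_chsh_le_two hA₁ hA₂ hB₁ hB₂ hA₁le hA₂le hB₁le hB₂le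
  linarith

/-- Every separable state `ω` of a bipartite system `(𝔄, 𝔅 ⊆ M)` satisfies the
Bell–CHSH inequality `β(ω) ≤ 1`, i.e. `(1/2) ω(A₁(B₁+B₂) + A₂(B₁−B₂)) ≤ 1` for all
self-adjoint contractions `A₁, A₂ ∈ 𝔄`, `B₁, B₂ ∈ 𝔅`. -/
theorem stmt6 [PartialOrder M] [StarOrderedRing M]
    (𝔄 𝔅 : StarSubalgebra ℂ M)
    (hcomm : ∀ a ∈ 𝔄, ∀ b ∈ 𝔅, a * b = b * a)
    (ω : M →ₗ[ℂ] ℂ) (hsep : IsSeparableState 𝔄 𝔅 ω)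
    (A₁ A₂ B₁ B₂ : M)
    (hA₁ : A₁ ∈ 𝔄) (hA₂ : A₂ ∈ 𝔄) (hB₁ : B₁ ∈ 𝔅) (hB₂ : B₂ ∈ 𝔅)
    (hA₁sa : IsSelfAdjoint A₁) (hA₂sa : IsSelfAdjoint A₂)
    (hB₁sa : IsSelfAdjoint B₁) (hB₂sa : IsSelfAdjoint B₂)
    (hA₁le : -1 ≤ A₁ ∧ A₁ ≤ 1) (hA₂le : -1 ≤ A₂ ∧ A₂ ≤ 1)
    (hB₁le : -1 ≤ B₁ ∧ B₁ ≤ 1) (hB₂le : -1 ≤ B₂ ∧ B₂ ≤ 1) :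
    (1 / 2 : ℝ) * (ω (A₁ * (B₁ + B₂) + A₂ * (B₁ - B₂))).re ≤ 1 :=
  stmt6_general 𝔄 𝔅 ω hsep A₁ A₂ B₁ B₂ hA₁ hA₂ hB₁ hB₂ hA₁le hA₂le hB₁le hB₂le

end BellCHSH
end

section
/- In the spin chain algebra extended by the Jordan–Wigner element T, the operators c_j* = T S_j (σ_x^{(j)} + iσ_y^{(j)})/2 and c_j = T S_j (σ_x^{(j)} − iσ_y^{(j)})/2 satisfy the canonical anticommutation relations: {c_j, c_k} = {c_j*, c_k*} = 0 and {c_j, c_k*} = δ_{jk}·1 for all integers j, k. -/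
/-!
Write `u_p = T S_p`. The string `S_p` is a product of the commuting involutions `σ_z⁽ᵐ⁾` over
the sites `m` between `0` and `p`, and `σ_z⁽ᵐ⁾` anticommutes with the spin operators at site `m`
only, while `T` anticommutes with those at negative sites. Counting signs, `u_p` anticommutes
with `σ_x⁽ⁱ⁾ ± iσ_y⁽ⁱ⁾` exactly when `i < p` (for `p ≤ i < 0` the signs of `T` and of `σ_z⁽ⁱ⁾`
cancel). Since the `u_p` commute with each other and square to `1`, for `j < k` the two terms of
`{u_j x_j, u_k y_k}` differ only by the sign picked up moving `x_j` past `u_k`, and for `j = k`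
the anticommutator reduces to the single-site one, `{σ_x + aσ_y, σ_x + bσ_y} = 2 + 2ab`.
-/

/-- The Jordan–Wigner string `S_j`: `S_j = σ_z⁽⁰⁾⋯σ_z⁽ʲ⁻¹⁾` for `j ≥ 1`, `S_0 = 1`, and
`S_j = σ_z⁽ʲ⁾⋯σ_z⁽⁻¹⁾` for `j ≤ −1`. -/
noncomputable def jwString {A : Type*} [Ring A] (σz : ℤ → A) : ℤ → A := fun j =>
  if 0 ≤ j then ((List.range j.toNat).map fun k => σz (k : ℤ)).prod
  else ((List.range (-j).toNat).map fun k => σz (j + (k : ℤ))).prod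

def SignCommute {A : Type*} [Ring A] (ε : ℤˣ) (a b : A) : Prop :=
  a * b = ε • (b * a)

namespace SignCommute

variable {A : Type*} [Ring A] {ε δ : ℤˣ} {a b x y : A}

theorem one_iff : SignCommute 1 a b ↔ Commute a b := by
  rw [SignCommute, one_smul]; rfl

theorem neg_one_iff : SignCommute (-1) a b ↔ a * b = -(b * a) := by
  rw [SignCommute, Units.neg_smul, one_smul]

theorem ite_iff {P : Prop} [Decidable P] :
    SignCommute (if P then -1 else 1) a b ↔ (P → SignCommute (-1) a b) ∧ (¬P → Commute a b) := by
  split_ifs with h <;> simp [h, one_iff]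

theorem ite_of_imp {P : Prop} [Decidable P] (hP : P → a * b = -b * a) (hnP : ¬P → a * b = b * a) :
    SignCommute (if P then -1 else 1) a b :=
  ite_iff.2 ⟨fun h => neg_one_iff.2 (by rw [hP h, neg_mul]), hnP⟩

theorem mul_left (ha : SignCommute ε a x) (hb : SignCommute δ b x) :
    SignCommute (ε * δ) (a * b) x := by
  unfold SignCommute at *
  rw [mul_assoc, hb, mul_smul_comm, ← mul_assoc, ha, smul_mul_assoc, smul_smul, mul_comm, mul_assoc]

theorem add_right (hx : SignCommute ε a x) (hy : SignCommute ε a y) :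
    SignCommute ε a (x + y) := by
  unfold SignCommute at *
  rw [mul_add, add_mul, hx, hy, smul_add]

theorem smul_right {R : Type*} [CommSemiring R] [Algebra R A] (hx : SignCommute ε a x) (r : R) :
    SignCommute ε a (r • x) := by
  unfold SignCommute at *
  rw [mul_smul_comm, hx, smul_mul_assoc, smul_comm]

end SignCommute

section Anticommutator

variable {A : Type*} [Ring A]

theorem smul_anticomm_smul {R : Type*} [CommSemiring R] [Algebra R A] (r : R) (x y : A) :
    r • x * (r • y) + r • y * (r • x) = (r * r) • (x * y + y * x) := by
  rw [smul_mul_smul_comm, smul_mul_smul_comm, smul_add]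

theorem anticomm_add_smul {R : Type*} [CommRing R] [Algebra R A] {x y : A} (hx : x * x = 1)
    (hy : y * y = 1) (hxy : x * y = -(y * x)) (c d : R) :
    (x + c • y) * (x + d • y) + (x + d • y) * (x + c • y) = (2 + 2 * c * d) • (1 : A) := by
  simp only [add_mul, mul_add, smul_mul_assoc, mul_smul_comm, hx, hy, hxy]
  module

theorem mul_mul_add_mul_mul_eq_zero {u v x y : A} (huv : Commute u v) (hxy : Commute x y)
    (hvx : SignCommute (-1) v x) (huy : Commute u y) :
    u * x * (v * y) + v * y * (u * x) = 0 := by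
  rw [SignCommute.neg_one_iff] at hvx
  have h₁ : u * x * (v * y) = -(u * v * (x * y)) := by
    rw [mul_assoc, ← mul_assoc x, ← neg_neg (x * v), ← hvx]; noncomm_ring
  have h₂ : v * y * (u * x) = u * v * (x * y) := by
    rw [mul_assoc, ← mul_assoc y, ← huy.eq, hxy.eq, huv.eq]; noncomm_ring
  rw [h₁, h₂, neg_add_cancel]

theorem mul_mul_mul_of_mul_self_eq_one {u x y : A} (hu : u * u = 1) (hx : Commute u x) :
    u * x * (u * y) = x * y := by
  rw [mul_assoc, ← mul_assoc x, ← hx.eq, ← mul_assoc, ← mul_assoc, hu, one_mul]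

theorem jordanWigner_anticomm {u x y : ℤ → A}
    (hu : ∀ p q, Commute (u p) (u q)) (hu2 : ∀ p, u p * u p = 1)
    (hx : ∀ i p, SignCommute (if i < p then -1 else 1) (u p) (x i))
    (hy : ∀ i p, SignCommute (if i < p then -1 else 1) (u p) (y i))
    (hxy : ∀ j k, j ≠ k → Commute (x j) (y k)) (j k : ℤ) :
    u j * x j * (u k * y k) + u k * y k * (u j * x j) =
      if j = k then x j * y j + y j * x j else 0 := by
  have hx' := fun i p => SignCommute.ite_iff.1 (hx i p)
  have hy' := fun i p => SignCommute.ite_iff.1 (hy i p)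
  rcases lt_trichotomy j k with h | rfl | h
  · rw [if_neg h.ne]
    exact mul_mul_add_mul_mul_eq_zero (hu j k) (hxy j k h.ne) ((hx' j k).1 h)
      ((hy' k j).2 h.not_gt)
  · rw [if_pos rfl, mul_mul_mul_of_mul_self_eq_one (hu2 j) ((hx' j j).2 (lt_irrefl j)),
      mul_mul_mul_of_mul_self_eq_one (hu2 j) ((hy' j j).2 (lt_irrefl j))]
  · rw [if_neg h.ne', add_comm]
    exact mul_mul_add_mul_mul_eq_zero (hu k j) (hxy j k h.ne').symm ((hy' k j).1 h)
      ((hx' j k).2 h.not_gt)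

theorem jordanWigner_anticomm_add_smul {R : Type*} [CommRing R] [Algebra R A] {u σx σy : ℤ → A}
    (hu : ∀ p q, Commute (u p) (u q)) (hu2 : ∀ p, u p * u p = 1)
    (hσx : ∀ i p, SignCommute (if i < p then -1 else 1) (u p) (σx i))
    (hσy : ∀ i p, SignCommute (if i < p then -1 else 1) (u p) (σy i))
    (hsite : ∀ j k, j ≠ k → ∀ a ∈ ({σx j, σy j} : Set A), ∀ b ∈ ({σx k, σy k} : Set A),
      Commute a b)
    (hx2 : ∀ i, σx i * σx i = 1) (hy2 : ∀ i, σy i * σy i = 1)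
    (hxy : ∀ i, σx i * σy i = -(σy i * σx i)) (c d : R) (j k : ℤ) :
    u j * (σx j + c • σy j) * (u k * (σx k + d • σy k)) +
        u k * (σx k + d • σy k) * (u j * (σx j + c • σy j)) =
      if j = k then (2 + 2 * c * d) • (1 : A) else 0 := by
  have hsign : ∀ (c : R) i p,
      SignCommute (if i < p then -1 else 1) (u p) (σx i + c • σy i) := fun c i p =>
    (hσx i p).add_right ((hσy i p).smul_right c)
  have hcomm : ∀ j k, j ≠ k → Commute (σx j + c • σy j) (σx k + d • σy k) := fun j k h =>
    have hc := hsite j k h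
    ((hc _ (by simp) _ (by simp)).add_right ((hc _ (by simp) _ (by simp)).smul_right d)).add_left
      (((hc _ (by simp) _ (by simp)).add_right
        ((hc _ (by simp) _ (by simp)).smul_right d)).smul_left c)
  rw [jordanWigner_anticomm hu hu2 (hsign c) (hsign d) hcomm]
  split_ifs with h
  · rw [h, anticomm_add_smul (hx2 k) (hy2 k) (hxy k)]
  · rfl

end Anticommutator

section JordanWignerString

variable {A : Type*} [Ring A] (σz : ℤ → A)

theorem jwString_zero : jwString σz 0 = 1 := by
  simp [jwString]

theorem jwString_natCast (n : ℕ) :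
    jwString σz n = ((List.range n).map fun k : ℕ => σz k).prod := by
  simp [jwString, ← List.map_eq_flatMap, List.map_map, Function.comp_def]

theorem jwString_neg_natCast (n : ℕ) :
    jwString σz (-n) = ((List.range n).map fun k : ℕ => σz (-n + k)).prod := by
  rcases n with _ | n
  · simp [jwString]
  · rw [jwString, if_neg (by omega), neg_neg, Int.toNat_natCast]
    simp [← List.map_eq_flatMap, List.map_map, Function.comp_def]

theorem jwString_natCast_add_one (n : ℕ) : jwString σz (n + 1) = jwString σz n * σz n := by
  rw [← Nat.cast_succ, jwString_natCast, jwString_natCast, List.range_succ, List.map_append,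
    List.prod_append, List.map_singleton, List.prod_singleton]

theorem jwString_neg_natCast_sub_one (n : ℕ) :
    jwString σz (-n - 1) = σz (-n - 1) * jwString σz (-n) := by
  rw [← neg_add', ← Nat.cast_succ, jwString_neg_natCast, jwString_neg_natCast,
    List.range_succ_eq_map]
  simp only [List.map_cons, List.map_map, List.prod_cons, Nat.cast_zero, add_zero]
  congr 3
  ext k
  simp only [Function.comp_apply, Nat.cast_succ]
  congr 1
  ring

theorem jwString_induction {P : ℤ → A → Prop} (zero : P 0 1)
    (succ : ∀ n : ℕ, P n (jwString σz n) → P (n + 1) (jwString σz n * σz n))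
    (pred : ∀ n : ℕ, P (-n) (jwString σz (-n)) → P (-n - 1) (σz (-n - 1) * jwString σz (-n)))
    (p : ℤ) : P p (jwString σz p) := by
  induction p using Int.induction_on with
  | zero => rwa [jwString_zero]
  | succ n ih => rw [jwString_natCast_add_one]; exact succ n ih
  | pred n ih => rw [jwString_neg_natCast_sub_one]; exact pred n ih

variable {σz}

theorem Commute.jwString_right {a : A} (h : ∀ m, Commute a (σz m)) (p : ℤ) :
    Commute a (jwString σz p) :=
  jwString_induction σz (P := fun _ s => Commute a s) (Commute.one_right a)
    (fun n hs => hs.mul_right (h n)) (fun _ hs => (h _).mul_right hs) p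

theorem jwString_mul_self (hcomm : ∀ m n, Commute (σz m) (σz n)) (hsq : ∀ m, σz m * σz m = 1)
    (p : ℤ) : jwString σz p * jwString σz p = 1 := by
  refine jwString_induction σz (P := fun _ s => s * s = 1) (mul_one 1) (fun n hs => ?_)
    (fun n hs => ?_) p
  · rw [(Commute.jwString_right (hcomm n) n).mul_mul_mul_comm, hs, hsq, mul_one]
  · rw [(Commute.jwString_right (hcomm _) _).symm.mul_mul_mul_comm, hs, hsq, mul_one]

theorem commute_mul_jwString {T : A} (hT : ∀ m, Commute T (σz m))
    (hcomm : ∀ m n, Commute (σz m) (σz n)) (p q : ℤ) :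
    Commute (T * jwString σz p) (T * jwString σz q) :=
  ((Commute.refl T).mul_right (Commute.jwString_right hT q)).mul_left
    ((Commute.jwString_right hT p).symm.mul_right
      (Commute.jwString_right (fun m => (Commute.jwString_right (hcomm m) p).symm) q))

theorem mul_jwString_mul_self {T : A} (hT : ∀ m, Commute T (σz m)) (hT2 : T * T = 1)
    (hcomm : ∀ m n, Commute (σz m) (σz n)) (hsq : ∀ m, σz m * σz m = 1) (p : ℤ) :
    T * jwString σz p * (T * jwString σz p) = 1 := by
  rw [(Commute.jwString_right hT p).symm.mul_mul_mul_comm, hT2, jwString_mul_self hcomm hsq,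
    mul_one]

theorem signCommute_mul_jwString {T : A} {x : ℤ → A} (hT : ∀ m, Commute T (σz m))
    (hT_neg : ∀ i < 0, T * x i = -x i * T) (hT_nonneg : ∀ i, 0 ≤ i → T * x i = x i * T)
    (hσ_self : ∀ i, σz i * x i = -x i * σz i) (hσ_ne : ∀ i m, m ≠ i → σz m * x i = x i * σz m)
    (i p : ℤ) : SignCommute (if i < p then -1 else 1) (T * jwString σz p) (x i) := by
  have hTx : SignCommute (if i < 0 then -1 else 1) T (x i) :=
    .ite_of_imp (hT_neg i) fun h => hT_nonneg i (not_lt.1 h)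
  have hσx : ∀ m, SignCommute (if m = i then -1 else 1) (σz m) (x i) := fun m =>
    .ite_of_imp (fun h => h ▸ hσ_self i) (hσ_ne i m)
  refine jwString_induction σz
    (P := fun p s => SignCommute (if i < p then -1 else 1) (T * s) (x i))
    (by rwa [mul_one]) (fun n hs => ?_) (fun n hs => ?_) p
  · rw [← mul_assoc]
    convert hs.mul_left (hσx n) using 1
    split_ifs <;> first | rfl | omega
  · rw [(hT _).left_comm]
    convert (hσx _).mul_left hs using 1
    split_ifs <;> first | rfl | omega

end JordanWignerString

theorem stmt19_general {A : Type*} [Ring A] [Algebra ℂ A]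
    (σx σy σz : ℤ → A) (T : A)
    -- Pauli relations at each site
    (hx2 : ∀ j, σx j * σx j = 1) (hy2 : ∀ j, σy j * σy j = 1) (hz2 : ∀ j, σz j * σz j = 1)
    (hxy : ∀ j, σx j * σy j = Complex.I • σz j)
    (hyx : ∀ j, σy j * σx j = -(Complex.I • σz j))
    (hyz : ∀ j, σy j * σz j = Complex.I • σx j)
    (hzy : ∀ j, σz j * σy j = -(Complex.I • σx j))
    (hzx : ∀ j, σz j * σx j = Complex.I • σy j)
    (hxz : ∀ j, σx j * σz j = -(Complex.I • σy j))
    -- Pauli operators at different sites commute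
    (hcomm : ∀ j k : ℤ, j ≠ k → ∀ a b : A, a ∈ ({σx j, σy j, σz j} : Set A) →
      b ∈ ({σx k, σy k, σz k} : Set A) → a * b = b * a)
    -- the Jordan–Wigner element T
    (hT2 : T * T = 1)
    (hTneg : ∀ j : ℤ, j < 0 →
      T * σx j = -(σx j) * T ∧ T * σy j = -(σy j) * T ∧ T * σz j = σz j * T)
    (hTpos : ∀ j : ℤ, 0 ≤ j →
      T * σx j = σx j * T ∧ T * σy j = σy j * T ∧ T * σz j = σz j * T) :
    ∀ j k : ℤ,
      (let c : ℤ → A := fun i =>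
        ((2 : ℂ))⁻¹ • (T * jwString σz i * (σx i - Complex.I • σy i))
      let cd : ℤ → A := fun i =>
        ((2 : ℂ))⁻¹ • (T * jwString σz i * (σx i + Complex.I • σy i))
      c j * c k + c k * c j = 0 ∧
      cd j * cd k + cd k * cd j = 0 ∧
      c j * cd k + cd k * c j = (if j = k then (1 : A) else 0)) := by
  intro j k
  have hzz : ∀ m n, Commute (σz m) (σz n) := fun m n =>
    (eq_or_ne m n).elim (fun h => h ▸ Commute.refl _) fun h => hcomm m n h _ _ (by simp) (by simp)
  have hTz : ∀ m, Commute T (σz m) := fun m =>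
    (lt_or_ge m 0).elim (fun h => (hTneg m h).2.2) (fun h => (hTpos m h).2.2)
  have hσx := signCommute_mul_jwString hTz (fun i h => (hTneg i h).1) (fun i h => (hTpos i h).1)
    (fun i => by rw [hzx, neg_mul, hxz, neg_neg]) fun i m h => hcomm m i h _ _ (by simp) (by simp)
  have hσy := signCommute_mul_jwString hTz (fun i h => (hTneg i h).2.1)
    (fun i h => (hTpos i h).2.1) (fun i => by rw [hzy, neg_mul, hyz])
    fun i m h => hcomm m i h _ _ (by simp) (by simp)
  have key := jordanWigner_anticomm_add_smul (R := ℂ) (commute_mul_jwString hTz hzz)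
    (mul_jwString_mul_self hTz hT2 hzz hz2) hσx hσy
    (fun j k h a ha b hb => hcomm j k h a b (by aesop) (by aesop)) hx2 hy2
    (fun i => by rw [hxy, hyx, neg_neg])
  simp only [sub_eq_add_neg, ← neg_smul, smul_anticomm_smul, key]
  split_ifs
  · simp only [smul_smul, neg_mul, mul_neg, neg_neg, mul_assoc, Complex.I_mul_I]
    norm_num
  · simp

/-- Jordan–Wigner transformation.  In the spin chain algebra extended by the
element `T` (a self-adjoint unitary with `TQT = Θ₋(Q)`, i.e. conjugation by `T` flips
`σ_x, σ_y` at negative sites and fixes everything at sites `≥ 0`), the operators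
`c_j* = T S_j (σ_x⁽ʲ⁾ + iσ_y⁽ʲ⁾)/2` and `c_j = T S_j (σ_x⁽ʲ⁾ − iσ_y⁽ʲ⁾)/2` satisfy the
canonical anticommutation relations `{c_j, c_k} = {c_j*, c_k*} = 0` and
`{c_j, c_k*} = δ_{jk}·1` for all integers `j, k`. -/
theorem stmt19 {A : Type*} [Ring A] [Algebra ℂ A] [StarRing A] [StarModule ℂ A]
    (σx σy σz : ℤ → A) (T : A)
    -- Pauli relations at each site
    (hx2 : ∀ j, σx j * σx j = 1) (hy2 : ∀ j, σy j * σy j = 1) (hz2 : ∀ j, σz j * σz j = 1)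
    (hxy : ∀ j, σx j * σy j = Complex.I • σz j)
    (hyx : ∀ j, σy j * σx j = -(Complex.I • σz j))
    (hyz : ∀ j, σy j * σz j = Complex.I • σx j)
    (hzy : ∀ j, σz j * σy j = -(Complex.I • σx j))
    (hzx : ∀ j, σz j * σx j = Complex.I • σy j)
    (hxz : ∀ j, σx j * σz j = -(Complex.I • σy j))
    (hsx : ∀ j, star (σx j) = σx j) (hsy : ∀ j, star (σy j) = σy j)
    (hsz : ∀ j, star (σz j) = σz j)
    -- Pauli operators at different sites commute
    (hcomm : ∀ j k : ℤ, j ≠ k → ∀ a b : A, a ∈ ({σx j, σy j, σz j} : Set A) →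
      b ∈ ({σx k, σy k, σz k} : Set A) → a * b = b * a)
    -- the Jordan–Wigner element T
    (hT2 : T * T = 1) (hTstar : star T = T)
    (hTneg : ∀ j : ℤ, j < 0 →
      T * σx j = -(σx j) * T ∧ T * σy j = -(σy j) * T ∧ T * σz j = σz j * T)
    (hTpos : ∀ j : ℤ, 0 ≤ j →
      T * σx j = σx j * T ∧ T * σy j = σy j * T ∧ T * σz j = σz j * T) :
    ∀ j k : ℤ,
      (let c : ℤ → A := fun i =>
        ((2 : ℂ))⁻¹ • (T * jwString σz i * (σx i - Complex.I • σy i))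
      let cd : ℤ → A := fun i =>
        ((2 : ℂ))⁻¹ • (T * jwString σz i * (σx i + Complex.I • σy i))
      c j * c k + c k * c j = 0 ∧
      cd j * cd k + cd k * cd j = 0 ∧
      c j * cd k + cd k * c j = (if j = k then (1 : A) else 0)) :=
  stmt19_general σx σy σz T hx2 hy2 hz2 hxy hyx hyz hzy hzx hxz hcomm hT2 hTneg hTpos
end
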